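/- arXiv:2103.05096 — 2 statements merged into one kernel-verified Lean document; each statement's English description precedes it below -/
import Mathlib

section
/- Consider the quadratic function R̃(M) = (1/2)·E[|σ(B_M)ᵀ y − ((β̄-β)/2)·σσᵀ y|²_{(σσᵀ)^{-1}}] where B_M = ((β̄-β)/2)σ + σM ranges over skew-symmetric M, the expectation is with respect to a probability measure with finite positive-definite second moment of y, and |z|²_G = zᵀGz. Then R̃(M) ≥ 0 with equality if and only if M = 0, i.e., the unique minimizer of the asymptotic entropy production rate over admissible feedback matrices is B* = ((β̄-β)/2)σ. -/
/-!
Skew-symmetry of `M` collapses the residual to `σ B_Mᵀ y - ((β̄-β)/2) σσᵀ y = -σ (M σᵀ) y`, and the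
weight `(σσᵀ)⁻¹` cancels the outer `σ`, so `R̃(M) = ½ E|M σᵀ y|² = ½ ∑ₖ rₖ ⬝ Σ rₖ` over the rows `rₖ` of
`M σᵀ`. Positive definiteness of `Σ` makes this nonnegative and zero only when `M σᵀ = 0`, that is,
when `M = 0`.
-/

open Matrix MeasureTheory

variable {ι κ R : Type*} [Fintype ι] [Fintype κ]

section SecondMoment

variable {μ : Measure (ι → ℝ)}

noncomputable def secondMoment (μ : Measure (ι → ℝ)) : Matrix ι ι ℝ :=
  of fun i j => ∫ y, y i * y j ∂μ

lemma dotProduct_mul_dotProduct_eq_sum (v y : ι → ℝ) :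
    (v ⬝ᵥ y) * (v ⬝ᵥ y) = ∑ i, ∑ j, v i * v j * (y i * y j) := by
  simp only [dotProduct, Finset.sum_mul_sum]
  exact Finset.sum_congr rfl fun i _ => Finset.sum_congr rfl fun j _ => by ring

lemma integrable_mul_apply (hmom : Integrable (fun y : ι → ℝ => ‖y‖ ^ 2) μ) (i j : ι) :
    Integrable (fun y : ι → ℝ => y i * y j) μ := by
  refine hmom.mono' (by fun_prop) (ae_of_all _ fun y => ?_)
  rw [norm_mul, sq]
  exact mul_le_mul (norm_le_pi_norm y i) (norm_le_pi_norm y j) (norm_nonneg _) (norm_nonneg _)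

lemma integrable_dotProduct_mul_dotProduct (hmom : Integrable (fun y : ι → ℝ => ‖y‖ ^ 2) μ)
    (v : ι → ℝ) :
    Integrable (fun y => (v ⬝ᵥ y) * (v ⬝ᵥ y)) μ := by
  simp_rw [dotProduct_mul_dotProduct_eq_sum v]
  exact integrable_finsetSum _ fun i _ => integrable_finsetSum _ fun j _ =>
    (integrable_mul_apply hmom i j).const_mul _

lemma integral_dotProduct_mul_dotProduct (hmom : Integrable (fun y : ι → ℝ => ‖y‖ ^ 2) μ)
    (v : ι → ℝ) :
    ∫ y, (v ⬝ᵥ y) * (v ⬝ᵥ y) ∂μ = v ⬝ᵥ secondMoment μ *ᵥ v := by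
  simp_rw [dotProduct_mul_dotProduct_eq_sum v]
  rw [integral_finsetSum _ fun i _ => integrable_finsetSum _ fun j _ =>
    (integrable_mul_apply hmom i j).const_mul _]
  simp only [dotProduct, mulVec, secondMoment, of_apply, Finset.mul_sum]
  refine Finset.sum_congr rfl fun i _ => ?_
  rw [integral_finsetSum _ fun j _ => (integrable_mul_apply hmom i j).const_mul _]
  refine Finset.sum_congr rfl fun j _ => ?_
  rw [integral_const_mul]
  ring

lemma integral_mulVec_dotProduct_mulVec (hmom : Integrable (fun y : ι → ℝ => ‖y‖ ^ 2) μ)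
    (N : Matrix κ ι ℝ) :
    ∫ y, N *ᵥ y ⬝ᵥ N *ᵥ y ∂μ = ∑ k, N k ⬝ᵥ secondMoment μ *ᵥ N k := by
  simp_rw [← integral_dotProduct_mul_dotProduct hmom]
  exact integral_finsetSum _ fun k _ => integrable_dotProduct_mul_dotProduct hmom (N k)

end SecondMoment

lemma Matrix.PosDef.sum_row_dotProduct_mulVec_nonneg {A : Matrix ι ι ℝ} (hA : A.PosDef) (N : Matrix κ ι ℝ) :
    0 ≤ ∑ k, N k ⬝ᵥ A *ᵥ N k :=
  Finset.sum_nonneg fun k _ => hA.posSemidef.dotProduct_mulVec_nonneg (N k)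

lemma Matrix.PosDef.sum_row_dotProduct_mulVec_eq_zero_iff {A : Matrix ι ι ℝ} (hA : A.PosDef) (N : Matrix κ ι ℝ) :
    ∑ k, N k ⬝ᵥ A *ᵥ N k = 0 ↔ N = 0 := by
  rw [Finset.sum_eq_zero_iff_of_nonneg fun k _ => by
    simpa using hA.posSemidef.dotProduct_mulVec_nonneg (N k)]
  refine ⟨fun h => funext fun k => by_contra fun hk => ?_, fun h k _ => by
    subst h; exact zero_dotProduct _⟩
  exact (hA.dotProduct_mulVec_pos hk).ne' (by simpa using h k (Finset.mem_univ k))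

lemma dotProduct_mulVec_inv_mul_transpose [DecidableEq ι] [CommRing R]
    {σ : Matrix ι ι R} (hσ : IsUnit σ.det) (x : ι → R) :
    σ *ᵥ x ⬝ᵥ (σ * σᵀ)⁻¹ *ᵥ σ *ᵥ x = x ⬝ᵥ x := by
  rw [Matrix.mul_inv_rev, ← mulVec_mulVec, mulVec_mulVec _ σ⁻¹, nonsing_inv_mul σ hσ, one_mulVec,
    dotProduct_mulVec, ← transpose_nonsing_inv, vecMul_transpose, mulVec_mulVec,
    nonsing_inv_mul σ hσ, one_mulVec]

lemma mul_transpose_smul_add_mul_sub [CommRing R]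
    {M : Matrix ι ι R} (hM : Mᵀ = -M) (σ : Matrix ι ι R) (c : R) :
    σ * (c • σ + σ * M)ᵀ - c • (σ * σᵀ) = -(σ * (M * σᵀ)) := by
  rw [transpose_add, transpose_smul, transpose_mul, hM]
  simp only [mul_add, mul_smul_comm, neg_mul, mul_neg]
  abel

theorem stmt_5_general {n : ℕ} (σ : Matrix (Fin n) (Fin n) ℝ) (hσ : IsUnit σ.det)
    (βbar β : ℝ)
    (μ : Measure (Fin n → ℝ))
    (hmom : Integrable (fun y : Fin n → ℝ => ‖y‖ ^ 2) μ)
    (hSigma : (Matrix.of fun i j : Fin n => ∫ y : Fin n → ℝ, y i * y j ∂μ).PosDef)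
    (M : Matrix (Fin n) (Fin n) ℝ) (hM : Mᵀ = -M)
    (B : Matrix (Fin n) (Fin n) ℝ) (hB : B = ((βbar - β) / 2) • σ + σ * M)
    (z : (Fin n → ℝ) → (Fin n → ℝ))
    (hz : ∀ y, z y = σ.mulVec (Bᵀ.mulVec y) - ((βbar - β) / 2) • (σ * σᵀ).mulVec y)
    (R : ℝ) (hR : R = (1 / 2) * ∫ y, z y ⬝ᵥ (σ * σᵀ)⁻¹.mulVec (z y) ∂μ) :
    0 ≤ R ∧ (R = 0 ↔ M = 0) := by
  have hquad : ∀ y, z y ⬝ᵥ (σ * σᵀ)⁻¹ *ᵥ z y = (M * σᵀ) *ᵥ y ⬝ᵥ (M * σᵀ) *ᵥ y := by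
    intro y
    rw [hz, hB, mulVec_mulVec, ← smul_mulVec, ← sub_mulVec, mul_transpose_smul_add_mul_sub hM,
      neg_mulVec, mulVec_neg, neg_dotProduct, dotProduct_neg, neg_neg, ← mulVec_mulVec,
      dotProduct_mulVec_inv_mul_transpose hσ]
  have hRsum : R = (1 / 2) * ∑ k, (M * σᵀ) k ⬝ᵥ secondMoment μ *ᵥ (M * σᵀ) k := by
    rw [hR, integral_congr_ae (ae_of_all _ hquad), integral_mulVec_dotProduct_mulVec hmom]
  have hσT : IsUnit σᵀ := (isUnit_iff_isUnit_det _).mpr (by rwa [det_transpose])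
  refine ⟨hRsum ▸ mul_nonneg (by norm_num) (hSigma.sum_row_dotProduct_mulVec_nonneg _), ?_⟩
  rw [hRsum, mul_eq_zero, or_iff_right (by norm_num)]
  exact (hSigma.sum_row_dotProduct_mulVec_eq_zero_iff _).trans hσT.mul_left_eq_zero

/-- The asymptotic entropy production rate
`R̃(M) = (1/2) E[|σ (B_M)ᵀ y − ((β̄-β)/2) σσᵀ y|²_{(σσᵀ)⁻¹}]`, where
`B_M = ((β̄-β)/2)σ + σM` with `M` skew-symmetric and the expectation is over a
probability measure with positive definite second moment, is nonnegative and
vanishes iff `M = 0`; i.e. the unique minimiser is `B* = ((β̄-β)/2)σ`. -/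
theorem stmt_5 {n : ℕ} (σ : Matrix (Fin n) (Fin n) ℝ) (hσ : IsUnit σ.det)
    (βbar β : ℝ) (hβbar : 0 < βbar) (hβ : 0 < β)
    (μ : Measure (Fin n → ℝ)) [IsProbabilityMeasure μ]
    (hmom : Integrable (fun y : Fin n → ℝ => ‖y‖ ^ 2) μ)
    (hSigma : (Matrix.of fun i j : Fin n => ∫ y : Fin n → ℝ, y i * y j ∂μ).PosDef)
    (M : Matrix (Fin n) (Fin n) ℝ) (hM : Mᵀ = -M)
    (B : Matrix (Fin n) (Fin n) ℝ) (hB : B = ((βbar - β) / 2) • σ + σ * M)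
    (z : (Fin n → ℝ) → (Fin n → ℝ))
    (hz : ∀ y, z y = σ.mulVec (Bᵀ.mulVec y) - ((βbar - β) / 2) • (σ * σᵀ).mulVec y)
    (R : ℝ) (hR : R = (1 / 2) * ∫ y, z y ⬝ᵥ (σ * σᵀ)⁻¹.mulVec (z y) ∂μ) :
    0 ≤ R ∧ (R = 0 ↔ M = 0) :=
  stmt_5_general σ hσ βbar β μ hmom hSigma M hM B hB z hz R hR
end

section
/- Let γ ∈ ℝ^{n×n} be symmetric positive definite and ε > 0. The solution of the rescaled Langevin system dX_t = (1/ε)Y_t dt, dY_t = −(1/ε²)γY_t dt − (1/ε)∇V(X_t) dt + (1/√ε)σ dW_t with X_0 = x, Y_0 = y admits the integral representation X_t = x + εγ^{-1}(I_n − e^{−tγ/ε²})y − ∫₀^t γ^{-1}(I_n − e^{−(t−r)γ/ε²})∇V(X_r) dr + √ε ∫₀^t γ^{-1}(I_n − e^{−(t−r)γ/ε²})σ dW_r. -/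
/-!
Put `A = γ / ε²`. The primitive `Z_t = ∫₀ᵗ Y` solves the linear equation
`Z'_s = -A Z_s + (y - ε⁻¹ ∫₀ˢ ∇V(X)) + ε^{-1/2} σ W_s` with `Z_0 = 0`, so by variation of constants
`Z_t = ∫₀ᵗ e^{-(t-r)A} (y - ε⁻¹ ∫₀ʳ ∇V(X) + ε^{-1/2} σ W_r) dr`. Since
`r ↦ A⁻¹ (1 - e^{-(t-r)A})` is a primitive of `-e^{-(t-r)A}` vanishing at `r = t`, integrating
by parts turns the first two terms into `A⁻¹ (1 - e^{-tA}) y - ε⁻¹ ∫₀ᵗ A⁻¹ (1 - e^{-(t-r)A}) ∇V(X_r) dr`.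
Then `X_t = x + ε⁻¹ Z_t` is the claimed representation.
-/

open Matrix MeasureTheory NormedSpace

attribute [local instance] Matrix.linftyOpNormedAddCommGroup Matrix.linftyOpNormedRing
  Matrix.linftyOpNormedSpace Matrix.linftyOpNormedAlgebra

namespace Matrix

variable {ι : Type*} [Fintype ι]

noncomputable def mulVecCLM : Matrix ι ι ℝ →L[ℝ] (ι → ℝ) →L[ℝ] ι → ℝ :=
  LinearMap.toContinuousLinearMap
    ((LinearMap.toContinuousLinearMap : ((ι → ℝ) →ₗ[ℝ] ι → ℝ) ≃ₗ[ℝ] _).toLinearMap ∘ₗ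
      mulVecBilin ℝ ℝ)

theorem _root_.HasDerivAt.matrix_mulVec {M : ℝ → Matrix ι ι ℝ} {v : ℝ → ι → ℝ}
    {M' : Matrix ι ι ℝ} {v' : ι → ℝ} {t : ℝ} (hM : HasDerivAt M M' t) (hv : HasDerivAt v v' t) :
    HasDerivAt (fun s => M s *ᵥ v s) (M t *ᵥ v' + M' *ᵥ v t) t :=
  mulVecCLM.hasDerivAt_of_bilinear (u := M) (v := v) (fun _ => hM) (fun _ => hv)

theorem _root_.intervalIntegral.integral_mulVec (M : Matrix ι ι ℝ) {f : ℝ → ι → ℝ} {a b : ℝ}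
    (hf : IntervalIntegrable f volume a b) :
    ∫ x in a..b, M *ᵥ f x = M *ᵥ ∫ x in a..b, f x :=
  (mulVecCLM M).intervalIntegral_comp_comm hf

end Matrix

section LinearODE

variable {ι : Type*} [Fintype ι] [DecidableEq ι] {A : Matrix ι ι ℝ}

theorem hasDerivAt_exp_neg_sub_smul (A : Matrix ι ι ℝ) (t r : ℝ) :
    HasDerivAt (fun r : ℝ => exp (-((t - r) • A))) (A * exp (-((t - r) • A))) r := by
  have h := (hasDerivAt_exp_smul_const' A (r - t)).comp_sub_const r t
  have hfun : (fun r : ℝ => exp (-((t - r) • A))) = fun r => exp ((r - t) • A) := by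
    funext r
    rw [← neg_smul, neg_sub]
  rw [hfun, ← neg_smul, neg_sub]
  exact h

theorem continuous_exp_neg_sub_smul (A : Matrix ι ι ℝ) (t : ℝ) :
    Continuous fun r : ℝ => exp (-((t - r) • A)) :=
  continuous_iff_continuousAt.2 fun r => (hasDerivAt_exp_neg_sub_smul A t r).continuousAt

theorem eq_exp_mulVec_add_integral_of_hasDerivAt {Z g : ℝ → ι → ℝ}
    (hZ : ∀ r, HasDerivAt Z (-(A *ᵥ Z r) + g r) r) (hg : Continuous g) (t : ℝ) :
    Z t = exp (-(t • A)) *ᵥ Z 0 + ∫ r in (0 : ℝ)..t, exp (-((t - r) • A)) *ᵥ g r := by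
  have hF : ∀ r, HasDerivAt (fun r => exp (-((t - r) • A)) *ᵥ Z r)
      (exp (-((t - r) • A)) *ᵥ g r) r := by
    intro r
    convert (hasDerivAt_exp_neg_sub_smul A t r).matrix_mulVec (hZ r) using 1
    rw [(((Commute.refl A).smul_right (t - r)).neg_right.exp_right).eq, mulVec_add, mulVec_neg,
      mulVec_mulVec]
    abel
  rw [intervalIntegral.integral_eq_sub_of_hasDerivAt (fun r _ => hF r)
    (((continuous_exp_neg_sub_smul A t).matrix_mulVec hg).intervalIntegrable _ _)]
  simp

theorem integral_exp_mulVec_eq_of_hasDerivAt (hA : IsUnit A.det) {G g : ℝ → ι → ℝ}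
    (hG : ∀ r, HasDerivAt G (g r) r) (hg : Continuous g) (t : ℝ) :
    ∫ r in (0 : ℝ)..t, exp (-((t - r) • A)) *ᵥ G r =
      (A⁻¹ * (1 - exp (-(t • A)))) *ᵥ G 0 +
        ∫ r in (0 : ℝ)..t, (A⁻¹ * (1 - exp (-((t - r) • A)))) *ᵥ g r := by
  have hGc : Continuous G := continuous_iff_continuousAt.2 fun r => (hG r).continuousAt
  have hEc := continuous_exp_neg_sub_smul A t
  have hF : ∀ r, HasDerivAt (fun r => (A⁻¹ * (1 - exp (-((t - r) • A)))) *ᵥ G r)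
      ((A⁻¹ * (1 - exp (-((t - r) • A)))) *ᵥ g r - exp (-((t - r) • A)) *ᵥ G r) r := by
    intro r
    have hΦ := ((hasDerivAt_exp_neg_sub_smul A t r).const_sub 1).const_mul A⁻¹
    rw [mul_neg, ← mul_assoc, nonsing_inv_mul A hA, one_mul] at hΦ
    simpa only [neg_mulVec, ← sub_eq_add_neg] using hΦ.matrix_mulVec (hG r)
  have hΦg : Continuous fun r => (A⁻¹ * (1 - exp (-((t - r) • A)))) *ᵥ g r :=
    (continuous_const.mul (continuous_const.sub hEc)).matrix_mulVec hg
  have hEG : Continuous fun r => exp (-((t - r) • A)) *ᵥ G r := hEc.matrix_mulVec hGc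
  have hFTC := intervalIntegral.integral_eq_sub_of_hasDerivAt (a := 0) (b := t)
    (fun r _ => hF r) ((hΦg.sub hEG).intervalIntegrable _ _)
  rw [intervalIntegral.integral_sub (hΦg.intervalIntegrable _ _) (hEG.intervalIntegrable _ _)]
    at hFTC
  simp only [sub_self, zero_smul, neg_zero, exp_zero, mul_zero, zero_mulVec, sub_zero] at hFTC
  linear_combination (norm := abel) -hFTC

theorem eq_mild_solution_of_hasDerivAt (hA : IsUnit A.det) {Z G g h : ℝ → ι → ℝ}
    (hZ : ∀ r, HasDerivAt Z (-(A *ᵥ Z r) + (G r + h r)) r) (hZ0 : Z 0 = 0)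
    (hG : ∀ r, HasDerivAt G (g r) r) (hg : Continuous g) (hh : Continuous h) (t : ℝ) :
    Z t = (A⁻¹ * (1 - exp (-(t • A)))) *ᵥ G 0 +
      (∫ r in (0 : ℝ)..t, (A⁻¹ * (1 - exp (-((t - r) • A)))) *ᵥ g r) +
        ∫ r in (0 : ℝ)..t, exp (-((t - r) • A)) *ᵥ h r := by
  have hGc : Continuous G := continuous_iff_continuousAt.2 fun r => (hG r).continuousAt
  have hEc := continuous_exp_neg_sub_smul A t
  rw [eq_exp_mulVec_add_integral_of_hasDerivAt hZ (hGc.add hh) t, hZ0, mulVec_zero, zero_add]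
  simp only [mulVec_add]
  rw [intervalIntegral.integral_add ((hEc.matrix_mulVec hGc).intervalIntegrable _ _)
      ((hEc.matrix_mulVec hh).intervalIntegrable _ _),
    integral_exp_mulVec_eq_of_hasDerivAt hA hG hg t]

end LinearODE

theorem stmt_15_general {n : ℕ} (γ σm : Matrix (Fin n) (Fin n) ℝ) (hγ : γ.PosDef)
    (ε : ℝ) (hε : 0 < ε)
    (gradV : (Fin n → ℝ) → (Fin n → ℝ)) (L : NNReal) (hLip : LipschitzWith L gradV)
    (X Y W : ℝ → Fin n → ℝ)
    (hXc : Continuous X) (hYc : Continuous Y) (hWc : Continuous W)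
    (x y : Fin n → ℝ)
    (hX : ∀ t : ℝ, X t = x + (1 / ε) • ∫ s in (0:ℝ)..t, Y s)
    (hY : ∀ t : ℝ, Y t = y - (1 / ε ^ 2) • (∫ s in (0:ℝ)..t, γ.mulVec (Y s))
        - (1 / ε) • (∫ s in (0:ℝ)..t, gradV (X s))
        + (1 / Real.sqrt ε) • σm.mulVec (W t)) :
    ∀ t : ℝ, 0 ≤ t →
      X t = x + ε • (γ⁻¹ * (1 - NormedSpace.exp (-((t / ε ^ 2) • γ)))).mulVec y
        - (∫ r in (0:ℝ)..t,
            (γ⁻¹ * (1 - NormedSpace.exp (-(((t - r) / ε ^ 2) • γ)))).mulVec (gradV (X r)))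
        + Real.sqrt ε • ∫ r in (0:ℝ)..t,
            (1 / ε ^ 2) • (NormedSpace.exp (-(((t - r) / ε ^ 2) • γ)) * σm).mulVec (W r) := by
  intro t _
  set A : Matrix (Fin n) (Fin n) ℝ := (ε ^ 2)⁻¹ • γ
  have hAγ : ∀ s : ℝ, (s / ε ^ 2) • γ = s • A := fun s => by rw [smul_smul, div_eq_mul_inv]
  have hinv_mul : (ε ^ 2 • γ⁻¹) * A = 1 := by
    rw [smul_mul_smul_comm, mul_inv_cancel₀ (by positivity), one_smul,
      nonsing_inv_mul γ hγ.det_pos.ne'.isUnit]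
  have hgradV : Continuous fun r => gradV (X r) := hLip.continuous.comp hXc
  have hG : ∀ r, HasDerivAt (fun u => y - (1 / ε) • ∫ s in (0:ℝ)..u, gradV (X s))
      (-((1 / ε) • gradV (X r))) r := fun r =>
    ((hgradV.integral_hasStrictDerivAt 0 r).hasDerivAt.const_smul (1 / ε)).const_sub y
  have hZ : ∀ r, HasDerivAt (fun u => ∫ s in (0:ℝ)..u, Y s)
      (-(A *ᵥ ∫ s in (0:ℝ)..r, Y s) + ((y - (1 / ε) • ∫ s in (0:ℝ)..r, gradV (X s))
        + (1 / Real.sqrt ε) • σm *ᵥ W r)) r := by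
    intro r
    refine (hYc.integral_hasStrictDerivAt 0 r).hasDerivAt.congr_deriv ?_
    rw [hY r, smul_mulVec, ← intervalIntegral.integral_mulVec _ (hYc.intervalIntegrable _ _)]
    simp only [one_div]
    abel
  rw [hX t, eq_mild_solution_of_hasDerivAt (isUnit_det_of_left_inverse hinv_mul) hZ
    intervalIntegral.integral_same hG (hgradV.fun_const_smul _).fun_neg (by fun_prop) t,
    inv_eq_left_inv hinv_mul]
  simp only [hAγ, intervalIntegral.integral_same, smul_zero, sub_zero, smul_mul, smul_mulVec,
    mulVec_neg, mulVec_smul, intervalIntegral.integral_neg, intervalIntegral.integral_smul,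
    mulVec_mulVec]
  have hsqrt_pos : 0 < Real.sqrt ε := Real.sqrt_pos.2 hε
  match_scalars <;> field_simp
  exact (Real.sq_sqrt hε.le).symm

/-- Pathwise integral representation of the rescaled Langevin
dynamics. If `(X, Y)` solves (pathwise, in integrated form, with noise path
`W`, `W 0 = 0`, the stochastic integral `∫₀ᵗ σ dW = σ W_t` for the constant
integrand) the system
`X_t = x + (1/ε)∫₀ᵗ Y_s ds`,
`Y_t = y − (1/ε²)∫₀ᵗ γY_s ds − (1/ε)∫₀ᵗ ∇V(X_s) ds + (1/√ε) σ W_t`,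
then `X` admits the representation
`X_t = x + εγ⁻¹(I − e^{−tγ/ε²})y − ∫₀ᵗ γ⁻¹(I − e^{−(t−r)γ/ε²})∇V(X_r) dr
      + √ε ∫₀ᵗ γ⁻¹(I − e^{−(t−r)γ/ε²})σ dW_r`,
where the stochastic convolution is expressed pathwise (via integration by
parts, since `W 0 = 0` and the integrand vanishes at `r = t`) as
`∫₀ᵗ γ⁻¹(I − e^{−(t−r)γ/ε²})σ dW_r = ∫₀ᵗ (1/ε²) e^{−(t−r)γ/ε²} σ W_r dr`. -/
theorem stmt_15 {n : ℕ} (γ σm : Matrix (Fin n) (Fin n) ℝ) (hγ : γ.PosDef)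
    (ε : ℝ) (hε : 0 < ε)
    (gradV : (Fin n → ℝ) → (Fin n → ℝ)) (L : NNReal) (hLip : LipschitzWith L gradV)
    (X Y W : ℝ → Fin n → ℝ)
    (hXc : Continuous X) (hYc : Continuous Y) (hWc : Continuous W) (hW0 : W 0 = 0)
    (x y : Fin n → ℝ)
    (hX : ∀ t : ℝ, X t = x + (1 / ε) • ∫ s in (0:ℝ)..t, Y s)
    (hY : ∀ t : ℝ, Y t = y - (1 / ε ^ 2) • (∫ s in (0:ℝ)..t, γ.mulVec (Y s))
        - (1 / ε) • (∫ s in (0:ℝ)..t, gradV (X s))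
        + (1 / Real.sqrt ε) • σm.mulVec (W t)) :
    ∀ t : ℝ, 0 ≤ t →
      X t = x + ε • (γ⁻¹ * (1 - NormedSpace.exp (-((t / ε ^ 2) • γ)))).mulVec y
        - (∫ r in (0:ℝ)..t,
            (γ⁻¹ * (1 - NormedSpace.exp (-(((t - r) / ε ^ 2) • γ)))).mulVec (gradV (X r)))
        + Real.sqrt ε • ∫ r in (0:ℝ)..t,
            (1 / ε ^ 2) • (NormedSpace.exp (-(((t - r) / ε ^ 2) • γ)) * σm).mulVec (W r) :=
  stmt_15_general γ σm hγ ε hε gradV L hLip X Y W hXc hYc hWc x y hX hY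
end
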